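/- Let κ be a regular uncountable cardinal, F a coloring of pairs of ordinals below κ with values in Fin 2, and h : κ → Fin 2. Suppose that for every α < κ the set A_α = {γ < κ : α < γ and F(β,γ) = h(β) for all β < α} has cardinality κ. Then there exist a set H ⊆ κ of cardinality κ and a value i ∈ Fin 2 such that F(α,β) = i for all α < β with α, β ∈ H. -/

import Mathlib

/-!
Build by transfinite recursion a strictly increasing sequence `f : κ → κ` whose values are
end-homogeneous: `F (f β) (f γ) = h (f β)` whenever `β < γ`. At stage `γ`, regularity bounds the
fewer than `κ` earlier values by some `α`, and `f γ` is taken in `A_α`. Then the colour of a pair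
from the range of `f` depends only on its smaller element, through `h`, and pigeonhole gives `κ`
values of `f` on which `h` is constant.
-/

open Cardinal Set

theorem Order.exists_gt_of_mk_lt_cof {α : Type*} [LinearOrder α] {s : Set α}
    (hs : #s < Order.cof α) : ∃ x, ∀ y ∈ s, y < x :=
  not_isCofinal_iff.1 fun hcof => (Order.cof_le hcof).not_gt hs

theorem Cardinal.IsRegular.mk_Iio_lt_cof {κ : Cardinal} (hreg : κ.IsRegular) (γ : κ.ord.ToType) :
    #(Iio γ) < Order.cof κ.ord.ToType := by
  rw [Ordinal.cof_toType, hreg.cof_ord]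
  simpa using mk_Iio_lt γ

theorem exists_strictMono_endHomogeneous {T C : Type*} [LinearOrder T] [WellFoundedLT T]
    (hcof : ∀ γ : T, #(Iio γ) < Order.cof T) (F : T → T → C) (h : T → C)
    (hext : ∀ α, ∃ γ, α < γ ∧ ∀ β < α, F β γ = h β) :
    ∃ f : T → T, StrictMono f ∧ ∀ ⦃β γ⦄, β < γ → F (f β) (f γ) = h (f β) := by
  choose next hnext_gt hnext_eq using hext
  have hbdd (γ : T) (g : Iio γ → T) : ∃ b, ∀ β, g β < b := by
    obtain ⟨b, hb⟩ := Order.exists_gt_of_mk_lt_cof (mk_range_le.trans_lt (hcof γ))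
    exact ⟨b, fun β => hb _ (mem_range_self β)⟩
  choose bound hbound using hbdd
  let f : T → T := WellFoundedLT.fix fun γ prev => next (bound γ fun β => prev β β.2)
  have hf (γ : T) : f γ = next (bound γ fun β => f β) := WellFoundedLT.fix_eq _ γ
  have hlt_bound {β γ : T} (hβγ : β < γ) : f β < bound γ fun β => f β :=
    hbound γ (fun β => f β) ⟨β, hβγ⟩
  refine ⟨f, fun β γ hβγ => ?_, fun β γ hβγ => ?_⟩
  · rw [hf γ]
    exact (hlt_bound hβγ).trans (hnext_gt _)
  · rw [hf γ]
    exact hnext_eq _ _ (hlt_bound hβγ)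

theorem homogeneous_set_from_branch_regular_general (κ : Cardinal)
    (hreg : κ.IsRegular)
    (F : κ.ord.ToType → κ.ord.ToType → Fin 2)
    (h : κ.ord.ToType → Fin 2)
    (hA : ∀ α : κ.ord.ToType,
      Cardinal.mk {γ : κ.ord.ToType | α < γ ∧ ∀ β < α, F β γ = h β} = κ) :
    ∃ (H : Set κ.ord.ToType) (i : Fin 2),
      Cardinal.mk H = κ ∧ ∀ α ∈ H, ∀ β ∈ H, α < β → F α β = i := by
  have hext (α : κ.ord.ToType) : ∃ γ, α < γ ∧ ∀ β < α, F β γ = h β := by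
    have hne : Nonempty {γ : κ.ord.ToType | α < γ ∧ ∀ β < α, F β γ = h β} := by
      rw [← mk_ne_zero_iff, hA α]
      exact hreg.pos.ne'
    obtain ⟨⟨γ, hγ⟩⟩ := hne
    exact ⟨γ, hγ⟩
  obtain ⟨f, hf_mono, hf_end⟩ :=
    exists_strictMono_endHomogeneous hreg.mk_Iio_lt_cof F h hext
  -- `infinite_pigeonhole_card` wants the colours in the universe of `κ`.
  have hcolours : #(ULift (Fin 2)) < κ.ord.cof := by
    rw [mk_fintype, Fintype.card_ulift, Fintype.card_fin, hreg.cof_ord]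
    exact natCast_lt_aleph0.trans_le hreg.aleph0_le
  obtain ⟨⟨i⟩, hi⟩ := infinite_pigeonhole_card (ULift.up ∘ h ∘ f) κ (mk_ord_toType κ).ge
    hreg.aleph0_le hcolours
  refine ⟨f '' ((ULift.up ∘ h ∘ f) ⁻¹' {⟨i⟩}), i, ?_, ?_⟩
  · rw [mk_image_eq hf_mono.injective]
    exact le_antisymm ((mk_set_le _).trans_eq (mk_ord_toType κ)) hi
  · rintro _ ⟨β, hβ, rfl⟩ _ ⟨γ, -, rfl⟩ hlt
    rw [hf_end (hf_mono.lt_iff_lt.1 hlt)]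
    exact congrArg ULift.down hβ

/-- If `κ` is a regular uncountable cardinal, `F` is a `2`-coloring of pairs
of ordinals below `κ`, `h : κ → Fin 2`, and for every `α < κ` the set of
`γ > α` such that `F β γ = h β` for all `β < α` has cardinality `κ`, then `F`
has a homogeneous set of cardinality `κ`. -/
theorem homogeneous_set_from_branch_regular (κ : Cardinal)
    (hreg : κ.IsRegular) (hκ : Cardinal.aleph0 < κ)
    (F : κ.ord.ToType → κ.ord.ToType → Fin 2)
    (h : κ.ord.ToType → Fin 2)
    (hA : ∀ α : κ.ord.ToType,
      Cardinal.mk {γ : κ.ord.ToType | α < γ ∧ ∀ β < α, F β γ = h β} = κ) :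
    ∃ (H : Set κ.ord.ToType) (i : Fin 2),
      Cardinal.mk H = κ ∧ ∀ α ∈ H, ∀ β ∈ H, α < β → F α β = i :=
  homogeneous_set_from_branch_regular_general κ hreg F h hA
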